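/- Let S be a symmetrically-normed ideal, B a closed range operator, and (B_n) a sequence of closed range operators with B_n − B ∈ S and ‖B_n − B‖_S → 0. If ‖B_n† − B†‖_S → 0, then ‖P_{ker B_n} − P_{ker B}‖_S < 1 for all sufficiently large n. -/

import Mathlib

open ContinuousLinearMap Filter MeasureTheory
open scoped InnerProductSpace

noncomputable section

variable {H : Type*} [NormedAddCommGroup H] [InnerProductSpace ℂ H] [CompleteSpace H]

/-- `B` is the Moore-Penrose inverse of `A`. -/
def IsMP (A B : H →L[ℂ] H) : Prop :=
  A * B * A = A ∧ B * A * B = B ∧ IsSelfAdjoint (A * B) ∧ IsSelfAdjoint (B * A)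

/-- A symmetrically-normed ideal of bounded operators on `H`. -/
structure SymmIdeal (H : Type*) [NormedAddCommGroup H] [InnerProductSpace ℂ H]
    [CompleteSpace H] where
  mem : (H →L[ℂ] H) → Prop
  snorm : (H →L[ℂ] H) → ℝ
  zero_mem : mem 0
  neg_mem : ∀ {X}, mem X → mem (-X)
  add_mem : ∀ {X Y}, mem X → mem Y → mem (X + Y)
  smul_mem : ∀ (c : ℂ) {X}, mem X → mem (c • X)
  mul_mem_left : ∀ (A : H →L[ℂ] H) {X}, mem X → mem (A * X)
  mul_mem_right : ∀ (A : H →L[ℂ] H) {X}, mem X → mem (X * A)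
  snorm_nonneg : ∀ X, 0 ≤ snorm X
  snorm_triangle : ∀ X Y, snorm (X + Y) ≤ snorm X + snorm Y
  snorm_symm : ∀ (A C X : H →L[ℂ] H), mem X → snorm (A * X * C) ≤ ‖A‖ * snorm X * ‖C‖
  opNorm_le_snorm : ∀ {X}, mem X → ‖X‖ ≤ snorm X

/-- `P` is the orthogonal projection onto the subspace `M`. -/
def IsOrthoProjOnto (P : H →L[ℂ] H) (M : Submodule ℂ H) : Prop :=
  IsSelfAdjoint P ∧ P * P = P ∧ LinearMap.range (P : H →ₗ[ℂ] H) = M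

/-! The kernel projections are `1 - B†B` and `1 - Bₙ†Bₙ`, so their difference is
`-B† (Bₙ - B) + (Bₙ† - B†)(-Bₙ)`, whose `S`-norm is at most
`‖B†‖ ‖Bₙ - B‖_S + ‖Bₙ† - B†‖_S (‖B‖ + ‖Bₙ - B‖_S) → 0`. The subtle point is that `Bₙ† - B†` lies
in `S` at all, which the second estimate needs: Wedin's formula expresses it through `Bₙ - B` and
its adjoint, and a two-sided ideal of bounded operators is closed under adjoints because
`T* = V* T V*` for the partial isometry `V` of the polar decomposition `T = V |T|`. -/

section PolarDecomposition

variable {𝕜 E : Type*} [RCLike 𝕜] [NormedAddCommGroup E] [InnerProductSpace 𝕜 E] [CompleteSpace E]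

theorem inner_apply_apply_eq_of_star_mul_self_eq {A T : E →L[𝕜] E}
    (h : star A * A = star T * T) (x z : E) : ⟪A x, A z⟫_𝕜 = ⟪T x, T z⟫_𝕜 := by
  rw [← adjoint_inner_right, ← adjoint_inner_right T, ← star_eq_adjoint, ← star_eq_adjoint]
  exact congrArg (fun S : E →L[𝕜] E => ⟪x, S z⟫_𝕜) h

theorem norm_apply_eq_of_star_mul_self_eq {A T : E →L[𝕜] E}
    (h : star A * A = star T * T) (x : E) : ‖A x‖ = ‖T x‖ := by
  have hx := inner_apply_apply_eq_of_star_mul_self_eq h x x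
  rw [inner_self_eq_norm_sq_to_K, inner_self_eq_norm_sq_to_K] at hx
  exact (sq_eq_sq₀ (norm_nonneg _) (norm_nonneg _)).1 (by exact_mod_cast hx)

/-- `U` is the partial isometry of the polar decomposition: `A x ↦ T x` is isometric on the
range of `A`, so it extends to its closure, and `U` is zero on the orthogonal complement. -/
theorem exists_mul_eq_and_star_mul_eq {A T : E →L[𝕜] E} (h : star A * A = star T * T) :
    ∃ U : E →L[𝕜] E, U * A = T ∧ star U * T = A := by
  set M := (LinearMap.range (A : E →ₗ[𝕜] E)).topologicalClosure
  let e : E →ₗ[𝕜] M := (A : E →ₗ[𝕜] E).codRestrict M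
    fun x => (LinearMap.range _).le_topologicalClosure ⟨x, rfl⟩
  have he : DenseRange e := by
    rw [DenseRange, Subtype.dense_iff, ← Set.range_comp]
    exact (Submodule.topologicalClosure_coe _).le
  set V := (T : E →ₗ[𝕜] E).extendOfNorm e
  have hVe : ∀ x, V (e x) = T x := LinearMap.extendOfNorm_eq he
    ⟨1, fun x => (one_mul ‖e x‖).symm ▸ (norm_apply_eq_of_star_mul_self_eq h x).ge⟩
  have hV : ∀ x (m : M), ⟪T x, V m⟫_𝕜 = ⟪A x, (m : E)⟫_𝕜 := fun x m =>
    he.induction_on m (isClosed_eq (by fun_prop) (by fun_prop)) fun z => by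
      rw [hVe]; exact (inner_apply_apply_eq_of_star_mul_self_eq h x z).symm
  refine ⟨V ∘L M.orthogonalProjectionOnto, ?_, ?_⟩
  · ext x
    change V (M.orthogonalProjectionOnto (e x : E)) = T x
    rw [Submodule.orthogonalProjectionOnto_mem_subspace_eq_self, hVe]
  · ext x
    refine ext_inner_right 𝕜 fun y => ?_
    change ⟪star (V ∘L M.orthogonalProjectionOnto) (T x), y⟫_𝕜 = _
    rw [star_eq_adjoint, adjoint_inner_left, comp_apply, hV]
    change ⟪(e x : E), _⟫_𝕜 = ⟪(e x : E), y⟫_𝕜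
    rw [← Submodule.coe_inner, Submodule.inner_orthogonalProjectionOnto_eq_of_mem_left]

end PolarDecomposition

theorem exists_star_eq_mul_mul (T : H →L[ℂ] H) : ∃ U : H →L[ℂ] H, star T = U * T * U := by
  have habs : IsSelfAdjoint (CFC.abs T) := (CFC.abs_nonneg T).isSelfAdjoint
  obtain ⟨U, hUA, hUT⟩ := exists_mul_eq_and_star_mul_eq (A := CFC.abs T) (T := T)
    (by rw [habs.star_eq, CFC.abs_mul_abs])
  refine ⟨star U, ?_⟩
  conv_lhs => rw [← hUA, star_mul, habs.star_eq, ← hUT]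

namespace IsOrthoProjOnto

variable {P Q : H →L[ℂ] H} {M : Submodule ℂ H}

theorem isStarProjection (hP : IsOrthoProjOnto P M) : IsStarProjection P := ⟨hP.2.1, hP.1⟩

theorem unique (hP : IsOrthoProjOnto P M) (hQ : IsOrthoProjOnto Q M) : P = Q :=
  hP.isStarProjection.ext hQ.isStarProjection (hP.2.2.trans hQ.2.2.symm)

end IsOrthoProjOnto

namespace IsMP

variable {B Bd : H →L[ℂ] H}

theorem star_mul_mul_eq (hB : IsMP B Bd) : star B * (B * Bd) = star B := by
  rw [← hB.2.2.1.star_eq, ← star_mul, hB.1]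

theorem mul_mul_star_eq (hB : IsMP B Bd) : Bd * B * star B = star B := by
  rw [← hB.2.2.2.star_eq, ← star_mul, ← mul_assoc, hB.1]

theorem isStarProjection_one_sub_mul (hB : IsMP B Bd) : IsStarProjection (1 - Bd * B) :=
  IsStarProjection.one_sub ⟨show Bd * B * (Bd * B) = Bd * B by rw [← mul_assoc, hB.2.1], hB.2.2.2⟩

theorem isOrthoProjOnto_ker (hB : IsMP B Bd) :
    IsOrthoProjOnto (1 - Bd * B) (LinearMap.ker (B : H →ₗ[ℂ] H)) := by
  refine ⟨(isStarProjection_one_sub_mul hB).2, (isStarProjection_one_sub_mul hB).1, ?_⟩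
  ext x
  constructor
  · rintro ⟨y, rfl⟩
    have hBP : B * (1 - Bd * B) = 0 := by rw [mul_sub, mul_one, ← mul_assoc, hB.1, sub_self]
    exact DFunLike.congr_fun hBP y
  · intro hx
    refine ⟨x, ?_⟩
    change x - Bd (B x) = x
    rw [show B x = 0 from hx, map_zero, sub_zero]

/-- Wedin's formula for the difference of two Moore-Penrose inverses. -/
theorem sub_eq {C Cd : H →L[ℂ] H} (hB : IsMP B Bd) (hC : IsMP C Cd) :
    Cd - Bd = -(Cd * (C - B) * Bd) + Cd * star Cd * star (C - B) * (1 - B * Bd)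
      + (1 - Cd * C) * star (C - B) * (star Bd * Bd) := by
  have h₁ : Cd * star Cd * star C = Cd := by
    rw [mul_assoc, ← star_mul, hC.2.2.1.star_eq, ← mul_assoc, hC.2.1]
  have h₂ : star B * (1 - B * Bd) = 0 := by rw [mul_sub, mul_one, hB.star_mul_mul_eq, sub_self]
  have h₃ : (1 - Cd * C) * star C = 0 := by rw [sub_mul, one_mul, hC.mul_mul_star_eq, sub_self]
  have h₄ : star B * (star Bd * Bd) = Bd := by
    rw [← mul_assoc, ← star_mul, hB.2.2.2.star_eq, hB.2.1]
  calc Cd - Bd = -(Cd * (C - B) * Bd) + Cd * star Cd * star C * (1 - B * Bd)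
        - Cd * star Cd * (star B * (1 - B * Bd)) + (1 - Cd * C) * star C * (star Bd * Bd)
        - (1 - Cd * C) * (star B * (star Bd * Bd)) := by
          rw [h₁, h₂, h₃, h₄]; noncomm_ring
    _ = _ := by rw [star_sub]; noncomm_ring

end IsMP

namespace SymmIdeal

variable (S : SymmIdeal H) {X : H →L[ℂ] H}

theorem star_mem (hX : S.mem X) : S.mem (star X) := by
  obtain ⟨U, hU⟩ := exists_star_eq_mul_mul X
  rw [hU]
  exact S.mul_mem_right U (S.mul_mem_left U hX)

theorem mem_sub_of_isMP {B Bd C Cd : H →L[ℂ] H} (hB : IsMP B Bd) (hC : IsMP C Cd)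
    (hCB : S.mem (C - B)) : S.mem (Cd - Bd) := by
  have hstar := S.star_mem hCB
  rw [hB.sub_eq hC]
  exact S.add_mem (S.add_mem (S.neg_mem (S.mul_mem_right _ (S.mul_mem_left _ hCB)))
    (S.mul_mem_right _ (S.mul_mem_left _ hstar))) (S.mul_mem_right _ (S.mul_mem_left _ hstar))

theorem snorm_mul_left_le (A : H →L[ℂ] H) (hX : S.mem X) : S.snorm (A * X) ≤ ‖A‖ * S.snorm X := by
  have h := S.snorm_symm A 1 X hX
  rw [mul_one] at h
  exact h.trans (mul_le_of_le_one_right (mul_nonneg (norm_nonneg _) (S.snorm_nonneg _)) norm_id_le)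

theorem snorm_mul_right_le (hX : S.mem X) (C : H →L[ℂ] H) : S.snorm (X * C) ≤ S.snorm X * ‖C‖ := by
  have h := S.snorm_symm 1 C X hX
  rw [one_mul] at h
  exact h.trans (mul_le_mul_of_nonneg_right
    (mul_le_of_le_one_left (S.snorm_nonneg _) norm_id_le) (norm_nonneg _))

theorem norm_le_norm_add_snorm_sub {B C : H →L[ℂ] H} (hCB : S.mem (C - B)) :
    ‖C‖ ≤ ‖B‖ + S.snorm (C - B) :=
  calc ‖C‖ = ‖B + (C - B)‖ := by rw [add_sub_cancel]
    _ ≤ ‖B‖ + ‖C - B‖ := norm_add_le _ _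
    _ ≤ ‖B‖ + S.snorm (C - B) := add_le_add_right (S.opNorm_le_snorm hCB) _

theorem snorm_one_sub_mul_sub_le {B Bd C Cd : H →L[ℂ] H} (hB : IsMP B Bd) (hC : IsMP C Cd)
    (hCB : S.mem (C - B)) :
    S.snorm ((1 - Cd * C) - (1 - Bd * B))
      ≤ ‖Bd‖ * S.snorm (C - B) + S.snorm (Cd - Bd) * (‖B‖ + S.snorm (C - B)) := by
  have hdiff : (1 - Cd * C) - (1 - Bd * B) = -Bd * (C - B) + (Cd - Bd) * -C := by noncomm_ring
  calc S.snorm ((1 - Cd * C) - (1 - Bd * B))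
      ≤ S.snorm (-Bd * (C - B)) + S.snorm ((Cd - Bd) * -C) := hdiff ▸ S.snorm_triangle _ _
    _ ≤ ‖-Bd‖ * S.snorm (C - B) + S.snorm (Cd - Bd) * ‖-C‖ :=
      add_le_add (S.snorm_mul_left_le _ hCB) (S.snorm_mul_right_le (S.mem_sub_of_isMP hB hC hCB) _)
    _ ≤ ‖Bd‖ * S.snorm (C - B) + S.snorm (Cd - Bd) * (‖B‖ + S.snorm (C - B)) := by
      rw [norm_neg, norm_neg]
      gcongr
      exacts [S.snorm_nonneg _, S.norm_le_norm_add_snorm_sub hCB]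

end SymmIdeal

theorem eventually_ker_projections_close_general (S : SymmIdeal H)
    (B : H →L[ℂ] H) (Bseq : ℕ → H →L[ℂ] H)
    (Bdag : H →L[ℂ] H) (Bseqdag : ℕ → H →L[ℂ] H)
    (hB : IsMP B Bdag) (hBn : ∀ n, IsMP (Bseq n) (Bseqdag n))
    (hmem : ∀ n, S.mem (Bseq n - B))
    (hconv : Filter.Tendsto (fun n => S.snorm (Bseq n - B)) Filter.atTop (nhds 0))
    (hdagconv : Filter.Tendsto (fun n => S.snorm (Bseqdag n - Bdag)) Filter.atTop (nhds 0))
    (Pk : H →L[ℂ] H) (Pkn : ℕ → H →L[ℂ] H)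
    (hPk : IsOrthoProjOnto Pk (LinearMap.ker (B : H →ₗ[ℂ] H)))
    (hPkn : ∀ n, IsOrthoProjOnto (Pkn n) (LinearMap.ker (Bseq n : H →ₗ[ℂ] H))) :
    ∀ᶠ n in Filter.atTop, S.snorm (Pkn n - Pk) < 1 := by
  have hbound : ∀ n, S.snorm (Pkn n - Pk) ≤ ‖Bdag‖ * S.snorm (Bseq n - B)
      + S.snorm (Bseqdag n - Bdag) * (‖B‖ + S.snorm (Bseq n - B)) := fun n => by
    rw [hPk.unique hB.isOrthoProjOnto_ker, (hPkn n).unique (hBn n).isOrthoProjOnto_ker]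
    exact S.snorm_one_sub_mul_sub_le hB (hBn n) (hmem n)
  have hlim : Tendsto (fun n => ‖Bdag‖ * S.snorm (Bseq n - B)
      + S.snorm (Bseqdag n - Bdag) * (‖B‖ + S.snorm (Bseq n - B))) atTop (nhds 0) := by
    simpa using (hconv.const_mul ‖Bdag‖).add (hdagconv.mul (tendsto_const_nhds.add hconv))
  filter_upwards [hlim.eventually (gt_mem_nhds one_pos)] with n hn
  exact (hbound n).trans_lt hn

theorem eventually_ker_projections_close (S : SymmIdeal H)
    (B : H →L[ℂ] H) (Bseq : ℕ → H →L[ℂ] H)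
    (Bdag : H →L[ℂ] H) (Bseqdag : ℕ → H →L[ℂ] H)
    (hBcr : IsClosed (LinearMap.range (B : H →ₗ[ℂ] H) : Set H))
    (hBncr : ∀ n, IsClosed (LinearMap.range (Bseq n : H →ₗ[ℂ] H) : Set H))
    (hB : IsMP B Bdag) (hBn : ∀ n, IsMP (Bseq n) (Bseqdag n))
    (hmem : ∀ n, S.mem (Bseq n - B))
    (hconv : Filter.Tendsto (fun n => S.snorm (Bseq n - B)) Filter.atTop (nhds 0))
    (hdagconv : Filter.Tendsto (fun n => S.snorm (Bseqdag n - Bdag)) Filter.atTop (nhds 0))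
    (Pk : H →L[ℂ] H) (Pkn : ℕ → H →L[ℂ] H)
    (hPk : IsOrthoProjOnto Pk (LinearMap.ker (B : H →ₗ[ℂ] H)))
    (hPkn : ∀ n, IsOrthoProjOnto (Pkn n) (LinearMap.ker (Bseq n : H →ₗ[ℂ] H))) :
    ∀ᶠ n in Filter.atTop, S.snorm (Pkn n - Pk) < 1 :=
  eventually_ker_projections_close_general S B Bseq Bdag Bseqdag hB hBn hmem hconv hdagconv Pk Pkn
    hPk hPkn
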